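/- For every N ∈ ℕ there exists B₀ ≥ 1 such that for all B ≥ B₀ the following holds: every finitely supported probability measure ξ* on [0,1] that maximizes the standardized maximin D-criterion Φ_B(ξ) = inf_{β∈[1,B]} 4e²β² [ ∫₀¹ x² e^{−2βx} dξ(x) − ( ∫₀¹ x e^{−βx} dξ(x) )² ] over all finitely supported probability measures ξ on [0,1] is supported at more than N points. -/
import Mathlib


open scoped BigOperators

/-- An approximate design on `ℝ`: a finitely supported probability measure,
given by its support points and positive weights summing to one. -/
structure Design where
  support : Finset ℝ
  w : ℝ → ℝ
  w_pos : ∀ x ∈ support, 0 < w x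
  w_zero : ∀ x ∉ support, w x = 0
  sum_one : ∑ x ∈ support, w x = 1

/-- Determinant of the information matrix of a design in the two-parameter exponential
growth model `η(x,α,β) = α + e^{−βx}`:
`det M(ξ,β) = ∫₀¹ x² e^{−2βx} dξ − (∫₀¹ x e^{−βx} dξ)²`. -/
noncomputable def detInfo (ξ : Design) (β : ℝ) : ℝ :=
  (∑ x ∈ ξ.support, ξ.w x * (x ^ 2 * Real.exp (-2 * β * x))) -
    (∑ x ∈ ξ.support, ξ.w x * (x * Real.exp (-β * x))) ^ 2

/-- Standardized maximin criterion `Φ_B(ξ) = inf_{β∈[1,B]} 4e²β² det M(ξ,β)` for the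
two-parameter exponential growth model. -/
noncomputable def PhiMaximin (B : ℝ) (ξ : Design) : ℝ :=
  ⨅ β : Set.Icc (1 : ℝ) B, 4 * Real.exp 2 * (β : ℝ) ^ 2 * detInfo ξ (β : ℝ)

lemma sq_le_exp' (t : ℝ) (ht : 0 ≤ t) : t ^ 2 ≤ Real.exp t := by
  have h := Real.add_one_le_exp (t / 4)
  have h4 : Real.exp t = Real.exp (t / 4) ^ 4 := by
    rw [← Real.exp_nat_mul]; congr 1; push_cast; ring
  have h1 : t ≤ (1 + t / 4) ^ 2 := by nlinarith [sq_nonneg (1 - t / 4)]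
  have h2 : (1 + t / 4) ^ 4 ≤ Real.exp (t / 4) ^ 4 := by
    have h0 : (0:ℝ) ≤ 1 + t / 4 := by linarith
    exact pow_le_pow_left₀ h0 (by linarith) 4
  nlinarith [sq_nonneg (1 + t/4), Real.exp_pos (t/4)]

lemma var_identity (ξ : Design) (g : ℝ → ℝ) :
    (∑ x ∈ ξ.support, ξ.w x * g x ^ 2) - (∑ x ∈ ξ.support, ξ.w x * g x) ^ 2
      = ∑ x ∈ ξ.support, ξ.w x * (g x - ∑ y ∈ ξ.support, ξ.w y * g y) ^ 2 := by
  set m := ∑ y ∈ ξ.support, ξ.w y * g y with hm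
  have : ∀ x ∈ ξ.support, ξ.w x * (g x - m) ^ 2
      = ξ.w x * g x ^ 2 - 2 * m * (ξ.w x * g x) + m ^ 2 * ξ.w x := by
    intro x _; ring
  rw [Finset.sum_congr rfl this]
  rw [Finset.sum_add_distrib, Finset.sum_sub_distrib, ← Finset.mul_sum, ← Finset.mul_sum,
    ξ.sum_one, ← hm]
  ring

lemma detInfo_eq (ξ : Design) (β : ℝ) :
    detInfo ξ β = (∑ x ∈ ξ.support, ξ.w x * (x * Real.exp (-β * x)) ^ 2)
      - (∑ x ∈ ξ.support, ξ.w x * (x * Real.exp (-β * x))) ^ 2 := by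
  unfold detInfo
  congr 1
  apply Finset.sum_congr rfl
  intro x _
  have hx : Real.exp (-β * x) * Real.exp (-β * x) = Real.exp (-2 * β * x) := by
    rw [← Real.exp_add]; ring_nf
  rw [mul_pow, pow_two (Real.exp (-β * x)), hx]

lemma detInfo_nonneg (ξ : Design) (β : ℝ) : 0 ≤ detInfo ξ β := by
  rw [detInfo_eq, var_identity]
  apply Finset.sum_nonneg
  intro x hx
  exact mul_nonneg (le_of_lt (ξ.w_pos x hx)) (sq_nonneg _)

lemma pair_le_detInfo (ξ : Design) (β a b : ℝ) (ha : a ∈ ξ.support) (hb : b ∈ ξ.support)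
    (hab : a ≠ b) :
    ξ.w a * ξ.w b * (a * Real.exp (-β * a) - b * Real.exp (-β * b)) ^ 2 ≤ detInfo ξ β := by
  classical
  rw [detInfo_eq, var_identity]
  set g : ℝ → ℝ := fun x => x * Real.exp (-β * x) with hg
  set m := ∑ y ∈ ξ.support, ξ.w y * g y with hm
  have hsub : ({a, b} : Finset ℝ) ⊆ ξ.support := by
    intro x hx
    rcases Finset.mem_insert.mp hx with h | h
    · exact h ▸ ha
    · exact (Finset.mem_singleton.mp h) ▸ hb
  have hpair : ξ.w a * (g a - m) ^ 2 + ξ.w b * (g b - m) ^ 2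
      ≤ ∑ x ∈ ξ.support, ξ.w x * (g x - m) ^ 2 := by
    calc ξ.w a * (g a - m) ^ 2 + ξ.w b * (g b - m) ^ 2
        = ∑ x ∈ ({a, b} : Finset ℝ), ξ.w x * (g x - m) ^ 2 :=
          (Finset.sum_pair (f := fun x => ξ.w x * (g x - m) ^ 2) hab).symm
      _ ≤ _ := by
          apply Finset.sum_le_sum_of_subset_of_nonneg hsub
          intro x hx _
          exact mul_nonneg (le_of_lt (ξ.w_pos x hx)) (sq_nonneg _)
  have hwsum : ξ.w a + ξ.w b ≤ 1 := by
    rw [← ξ.sum_one]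
    calc ξ.w a + ξ.w b = ∑ x ∈ ({a, b} : Finset ℝ), ξ.w x :=
          (Finset.sum_pair (f := fun x => ξ.w x) hab).symm
      _ ≤ _ := by
          apply Finset.sum_le_sum_of_subset_of_nonneg hsub
          intro x hx _
          exact le_of_lt (ξ.w_pos x hx)
  have hwa := ξ.w_pos a ha
  have hwb := ξ.w_pos b hb
  have h1 : 0 ≤ ξ.w a * (g a - m) ^ 2 + ξ.w b * (g b - m) ^ 2 := by positivity
  have h2 : ξ.w a * ξ.w b * (g a - g b) ^ 2
      ≤ (ξ.w a + ξ.w b) * (ξ.w a * (g a - m) ^ 2 + ξ.w b * (g b - m) ^ 2) := by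
    nlinarith [sq_nonneg (ξ.w a * (g a - m) + ξ.w b * (g b - m))]
  have key : ξ.w a * ξ.w b * (g a - g b) ^ 2
      ≤ ξ.w a * (g a - m) ^ 2 + ξ.w b * (g b - m) ^ 2 := by
    nlinarith [h1, h2, hwsum]
  calc ξ.w a * ξ.w b * (g a - g b) ^ 2 ≤ _ := key
    _ ≤ _ := hpair

lemma detInfo_le (ξ : Design) (β : ℝ) :
    detInfo ξ β ≤ ∑ x ∈ ξ.support, ξ.w x * (x ^ 2 * Real.exp (-2 * β * x)) := by
  unfold detInfo
  nlinarith [sq_nonneg (∑ x ∈ ξ.support, ξ.w x * (x * Real.exp (-β * x)))]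

lemma Phi_le (B : ℝ) (ξ : Design) (β₀ : ℝ) (hβ₀ : β₀ ∈ Set.Icc (1:ℝ) B) :
    PhiMaximin B ξ ≤ 4 * Real.exp 2 * β₀ ^ 2 * detInfo ξ β₀ := by
  have hbdd : BddBelow (Set.range fun β : Set.Icc (1:ℝ) B =>
      4 * Real.exp 2 * (β : ℝ) ^ 2 * detInfo ξ (β : ℝ)) := by
    refine ⟨0, ?_⟩
    rintro y ⟨β, rfl⟩
    have := detInfo_nonneg ξ (β : ℝ)
    positivity
  exact ciInf_le hbdd ⟨β₀, hβ₀⟩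

lemma le_Phi (B : ℝ) (hB : 1 ≤ B) (ξ : Design) (c : ℝ)
    (h : ∀ β : ℝ, β ∈ Set.Icc (1:ℝ) B → c ≤ 4 * Real.exp 2 * β ^ 2 * detInfo ξ β) :
    c ≤ PhiMaximin B ξ := by
  haveI : Nonempty (Set.Icc (1:ℝ) B) := ⟨⟨1, by simp [hB]⟩⟩
  exact le_ciInf fun β => h β β.2
lemma geom_inj : Function.Injective (fun j : ℕ => ((1:ℝ)/3)^j) := by
  intro a b hab
  by_contra hne
  rcases Nat.lt_or_ge a b with h | h
  · have := pow_lt_pow_right_of_lt_one₀ (by norm_num : (0:ℝ) < 1/3) (by norm_num) h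
    simp only at hab; linarith
  · have hlt : b < a := by omega
    have := pow_lt_pow_right_of_lt_one₀ (by norm_num : (0:ℝ) < 1/3) (by norm_num) hlt
    simp only at hab; linarith

open Classical in
/-- The design with mass 1/2 at 0 and mass 1/(2(m+1)) at each of the points (1/3)^j, j=0..m. -/
noncomputable def geomDesign (m : ℕ) : Design where
  support := insert 0 ((Finset.range (m+1)).image fun j => ((1:ℝ)/3)^j)
  w := fun x => if x = 0 then 1/2
    else if x ∈ (Finset.range (m+1)).image (fun j => ((1:ℝ)/3)^j) then 1/(2*(m+1)) else 0
  w_pos := by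
    intro x hx
    rcases Finset.mem_insert.mp hx with h | h
    · subst h; rw [if_pos rfl]; norm_num
    · obtain ⟨j, -, rfl⟩ := Finset.mem_image.mp h
      rw [if_neg (by positivity), if_pos h]
      positivity
  w_zero := by
    intro x hx
    rw [Finset.mem_insert] at hx
    push_neg at hx
    rw [if_neg hx.1, if_neg hx.2]
  sum_one := by
    have h0 : (0:ℝ) ∉ (Finset.range (m+1)).image (fun j => ((1:ℝ)/3)^j) := by
      simp only [Finset.mem_image, Finset.mem_range, not_exists]
      intro j hj
      have : (0:ℝ) < (1/3:ℝ)^j := by positivity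
      rw [hj.2] at this; exact lt_irrefl 0 this
    rw [Finset.sum_insert h0, if_pos rfl]
    have hcongr : ∀ x ∈ (Finset.range (m+1)).image (fun j => ((1:ℝ)/3)^j),
        (if x = 0 then (1:ℝ)/2
          else if x ∈ (Finset.range (m+1)).image (fun j => ((1:ℝ)/3)^j) then 1/(2*(m+1)) else 0)
        = 1/(2*(m+1)) := by
      intro x hx
      obtain ⟨j, -, rfl⟩ := Finset.mem_image.mp hx
      rw [if_neg (by positivity), if_pos hx]
    rw [Finset.sum_congr rfl hcongr, Finset.sum_const,
      Finset.card_image_of_injective _ geom_inj, Finset.card_range, nsmul_eq_mul]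
    push_cast
    field_simp
    ring

lemma geomDesign_w_zero (m : ℕ) : (geomDesign m).w 0 = 1/2 := by
  simp [geomDesign]

lemma geomDesign_w_pow (m j : ℕ) (hj : j ≤ m) :
    (geomDesign m).w (((1:ℝ)/3)^j) = 1/(2*(m+1)) := by
  have hmem : ((1:ℝ)/3)^j ∈ (Finset.range (m+1)).image (fun j => ((1:ℝ)/3)^j) :=
    Finset.mem_image.mpr ⟨j, Finset.mem_range.mpr (by omega), rfl⟩
  show (if _ then _ else _) = _
  rw [if_neg (by positivity), if_pos hmem]

lemma geomDesign_mem_pow (m j : ℕ) (hj : j ≤ m) :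
    ((1:ℝ)/3)^j ∈ (geomDesign m).support :=
  Finset.mem_insert_of_mem (Finset.mem_image.mpr ⟨j, Finset.mem_range.mpr (by omega), rfl⟩)

lemma geomDesign_mem_zero (m : ℕ) : (0:ℝ) ∈ (geomDesign m).support :=
  Finset.mem_insert_self _ _

lemma geomDesign_support_subset (m : ℕ) :
    ↑(geomDesign m).support ⊆ Set.Icc (0:ℝ) 1 := by
  intro x hx
  simp only [geomDesign, Finset.coe_insert, Set.mem_insert_iff, Finset.coe_image,
    Set.mem_image, Finset.mem_coe, Finset.mem_range] at hx
  rcases hx with rfl | ⟨j, -, rfl⟩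
  · constructor <;> norm_num
  · constructor
    · positivity
    · exact pow_le_one₀ (by norm_num) (by norm_num)
lemma geom_lower (m : ℕ) (B : ℝ) (hB : 1 ≤ B) (hBm : B ≤ 3^m) :
    Real.exp (-4) / (m+1) ≤ PhiMaximin B (geomDesign m) := by
  apply le_Phi B hB
  intro β hβ
  obtain ⟨hβ1, hβB⟩ := hβ
  have hβpos : (0:ℝ) < β := lt_of_lt_of_le one_pos hβ1
  set j := ⌊Real.logb 3 β⌋₊ with hj
  have hlogb0 : 0 ≤ Real.logb 3 β := Real.logb_nonneg (by norm_num) hβ1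
  have h3j : (3:ℝ)^j ≤ β := by
    have h1 : (3:ℝ) ^ ((j:ℝ)) ≤ (3:ℝ) ^ Real.logb 3 β :=
      Real.rpow_le_rpow_of_exponent_le (by norm_num) (Nat.floor_le hlogb0)
    rwa [Real.rpow_natCast, Real.rpow_logb (by norm_num) (by norm_num) hβpos] at h1
  have hβ3j : β < 3^(j+1) := by
    have h1 : (3:ℝ) ^ Real.logb 3 β < (3:ℝ) ^ (((j+1 : ℕ)):ℝ) := by
      apply Real.rpow_lt_rpow_of_exponent_lt (by norm_num)
      push_cast
      exact Nat.lt_floor_add_one _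
    rwa [Real.rpow_natCast, Real.rpow_logb (by norm_num) (by norm_num) hβpos] at h1
  have hjm : j ≤ m := by
    by_contra h
    push_neg at h
    have h1 : (3:ℝ)^(m+1) ≤ 3^j := pow_le_pow_right₀ (by norm_num) (by omega)
    have h2 : (3:ℝ)^m < 3^(m+1) := by
      rw [pow_succ]
      nlinarith [pow_pos (by norm_num : (0:ℝ) < 3) m]
    linarith
  set x : ℝ := ((1:ℝ)/3)^j with hx
  have hxval : x = 1/3^j := by rw [hx, div_pow, one_pow]
  have h3jpos : (0:ℝ) < 3^j := by positivity
  have hxpos : 0 < x := by rw [hxval]; positivity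
  have ht1 : 1 ≤ β * x := by
    rw [hxval, mul_one_div, le_div_iff₀ h3jpos, one_mul]
    exact h3j
  have ht3 : β * x ≤ 3 := by
    rw [hxval]
    have h' : β < 3 * 3^j := by rw [pow_succ] at hβ3j; linarith
    rw [mul_one_div, div_le_iff₀ h3jpos]
    linarith
  have hne : (0:ℝ) ≠ x := ne_of_lt hxpos
  have hpair := pair_le_detInfo (geomDesign m) β 0 x (geomDesign_mem_zero m)
    (geomDesign_mem_pow m j hjm) hne
  rw [geomDesign_w_zero, hx, geomDesign_w_pow m j hjm, ← hx] at hpair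
  simp only [mul_zero, zero_mul, zero_sub, neg_sq] at hpair
  set E := Real.exp (-β * x) with hE
  have hEpos : 0 < E := Real.exp_pos _
  have hE3 : Real.exp (-3) ≤ E := by
    apply Real.exp_le_exp.mpr
    nlinarith
  have htE : Real.exp (-3) ≤ β * x * E := by
    calc Real.exp (-3) ≤ E := hE3
      _ = 1 * E := (one_mul E).symm
      _ ≤ (β * x) * E := by
          apply mul_le_mul_of_nonneg_right ht1 hEpos.le
  have hsq : Real.exp (-3) ^ 2 ≤ (β * x * E) ^ 2 :=
    pow_le_pow_left₀ (Real.exp_pos _).le htE 2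
  have hexp4 : Real.exp 2 * Real.exp (-3) ^ 2 = Real.exp (-4) := by
    rw [pow_two, ← Real.exp_add, ← Real.exp_add]
    norm_num
  have hm1 : (0:ℝ) < (m:ℝ) + 1 := by positivity
  calc Real.exp (-4) / (m+1) = Real.exp 2 * Real.exp (-3)^2 / (m+1) := by rw [hexp4]
    _ ≤ Real.exp 2 * (β * x * E)^2 / (m+1) := by
        gcongr
    _ = 4 * Real.exp 2 * β^2 * (1/2 * (1/(2*(m+1))) * (x * E)^2) := by
        field_simp
        ring
    _ ≤ 4 * Real.exp 2 * β^2 * detInfo (geomDesign m) β := by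
        apply mul_le_mul_of_nonneg_left hpair
        positivity
lemma Phi_upper (B : ℝ) (ξ : Design) (hsupp : ↑ξ.support ⊆ Set.Icc (0:ℝ) 1)
    (β δ C : ℝ) (hβ : β ∈ Set.Icc (1:ℝ) B) (hδ : 0 < δ) (hC : 0 < C)
    (hgood : ∀ x ∈ ξ.support, x ≠ 0 → β * x < δ ∨ C < β * x) :
    PhiMaximin B ξ ≤ 4 * Real.exp 2 * max (δ^2) (Real.exp (-C)) := by
  set M := max (δ^2) (Real.exp (-C)) with hM
  have hβpos : (0:ℝ) < β := lt_of_lt_of_le one_pos hβ.1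
  have hMpos : (0:ℝ) < M := lt_of_lt_of_le (by positivity) (le_max_left _ _)
  have hterm : ∀ x ∈ ξ.support, ξ.w x * (x^2 * Real.exp (-2*β*x)) ≤ ξ.w x * (M / β^2) := by
    intro x hxm
    apply mul_le_mul_of_nonneg_left ?_ (ξ.w_pos x hxm).le
    rcases eq_or_ne x 0 with rfl | hx0
    · simp only [ne_eq, OfNat.ofNat_ne_zero, not_false_eq_true, zero_pow, zero_mul]
      positivity
    · have hx01 := hsupp (Finset.mem_coe.mpr hxm)
      have hxpos : 0 < x := lt_of_le_of_ne hx01.1 (Ne.symm hx0)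
      have htpos : 0 < β * x := mul_pos hβpos hxpos
      have key : (β*x)^2 * Real.exp (-2*(β*x)) ≤ M := by
        rcases hgood x hxm hx0 with h | h
        · have h1 : Real.exp (-2*(β*x)) ≤ 1 := Real.exp_le_one_iff.mpr (by nlinarith)
          have h2 : (β*x)^2 * Real.exp (-2*(β*x)) ≤ (β*x)^2 := by
            nlinarith [sq_nonneg (β*x), Real.exp_pos (-2*(β*x))]
          have h3 : (β*x)^2 ≤ δ^2 := pow_le_pow_left₀ htpos.le h.le 2
          exact le_trans (le_trans h2 h3) (le_max_left _ _)
        · have h1 : (β*x)^2 ≤ Real.exp (β*x) := sq_le_exp' _ htpos.le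
          have h2 : (β*x)^2 * Real.exp (-2*(β*x))
              ≤ Real.exp (β*x) * Real.exp (-2*(β*x)) :=
            mul_le_mul_of_nonneg_right h1 (Real.exp_pos _).le
          have h3 : Real.exp (β*x) * Real.exp (-2*(β*x)) = Real.exp (-(β*x)) := by
            rw [← Real.exp_add]; ring_nf
          have h4 : Real.exp (-(β*x)) ≤ Real.exp (-C) := Real.exp_le_exp.mpr (by linarith)
          calc (β*x)^2 * Real.exp (-2*(β*x)) ≤ Real.exp (-(β*x)) := h3 ▸ h2
            _ ≤ Real.exp (-C) := h4
            _ ≤ M := le_max_right _ _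
      rw [le_div_iff₀ (by positivity : (0:ℝ) < β^2)]
      calc x^2 * Real.exp (-2*β*x) * β^2 = (β*x)^2 * Real.exp (-2*(β*x)) := by
            rw [mul_assoc (-2 : ℝ) β x]
            ring
        _ ≤ M := key
  have hsum : ∑ x ∈ ξ.support, ξ.w x * (x^2 * Real.exp (-2*β*x)) ≤ M / β^2 := by
    calc ∑ x ∈ ξ.support, ξ.w x * (x^2 * Real.exp (-2*β*x))
        ≤ ∑ x ∈ ξ.support, ξ.w x * (M / β^2) := Finset.sum_le_sum hterm
      _ = M / β^2 := by rw [← Finset.sum_mul, ξ.sum_one, one_mul]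
  have hdet : detInfo ξ β ≤ M / β^2 := le_trans (detInfo_le ξ β) hsum
  calc PhiMaximin B ξ ≤ 4 * Real.exp 2 * β^2 * detInfo ξ β := Phi_le B ξ β hβ
    _ ≤ 4 * Real.exp 2 * β^2 * (M / β^2) := by
        apply mul_le_mul_of_nonneg_left hdet
        positivity
    _ = 4 * Real.exp 2 * M := by field_simp

lemma exists_good_index (S : Finset ℝ) (N : ℕ) (hcard : S.card ≤ N) (δ C : ℝ)
    (hδ : 0 < δ) (hδC : δ ≤ C) :
    ∃ i ≤ N, ∀ x ∈ S, 0 < x →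
      (C * (2*C/δ)^i * x < δ ∨ C < C * (2*C/δ)^i * x) := by
  classical
  have hC : 0 < C := lt_of_lt_of_le hδ hδC
  set R := 2*C/δ with hR
  have hR1 : 1 ≤ R := by
    rw [hR, le_div_iff₀ hδ, one_mul]; linarith
  have hRδ : R * δ = 2*C := by
    rw [hR]; field_simp
  by_contra hcon
  push_neg at hcon
  -- hcon : ∀ i ≤ N, ∃ x ∈ S, 0 < x ∧ δ ≤ C * R^i * x ∧ C * R^i * x ≤ C
  have hcon' : ∀ i ∈ Finset.range (N+1), ∃ x ∈ S, 0 < x ∧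
      δ ≤ C * R^i * x ∧ C * R^i * x ≤ C := fun i hi =>
    hcon i (Nat.lt_succ_iff.mp (Finset.mem_range.mp hi))
  choose! f hfS hfpos hf1 hf2 using hcon'
  have hmaps : ∀ i ∈ Finset.range (N+1), f i ∈ S.filter (fun x => 0 < x) := by
    intro i hi
    exact Finset.mem_filter.mpr ⟨hfS i hi, hfpos i hi⟩
  have hcardlt : (S.filter (fun x => 0 < x)).card < (Finset.range (N+1)).card := by
    rw [Finset.card_range]
    exact lt_of_le_of_lt (le_trans (Finset.card_filter_le _ _) hcard) (by omega)
  obtain ⟨i, hi, i', hi', hne, heq⟩ :=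
    Finset.exists_ne_map_eq_of_card_lt_of_maps_to hcardlt hmaps
  have main : ∀ a b : ℕ, a ∈ Finset.range (N+1) → b ∈ Finset.range (N+1) →
      a < b → f a = f b → False := by
    intro a b ha hb hab hfeq
    set x := f a with hxdef
    have hx1 : δ ≤ C * R^a * x := hf1 a ha
    have hx2 : C * R^b * x ≤ C := hfeq ▸ hf2 b hb
    have hpow : R^b = R^a * R^(b-a) := by
      rw [← pow_add]; congr 1; omega
    have hRk : R ≤ R^(b-a) := by
      calc R = R^1 := (pow_one R).symm
        _ ≤ R^(b-a) := pow_le_pow_right₀ hR1 (by omega)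
    have hxpos : 0 < x := hfpos a ha
    have hRpos : (0:ℝ) < R := lt_of_lt_of_le one_pos hR1
    have hchain : 2*C ≤ C * R^b * x := by
      calc 2*C = R * δ := hRδ.symm
        _ ≤ R^(b-a) * (C * R^a * x) :=
            mul_le_mul hRk hx1 hδ.le (by positivity)
        _ = C * R^b * x := by rw [hpow]; ring
    linarith
  rcases hne.lt_or_gt with h | h
  · exact main i i' hi hi' h heq
  · exact main i' i hi' hi h heq.symm

set_option maxHeartbeats 2000000 in
/-- For the two-parameter exponential growth model on `[0,1]`: for every `N` there is
`B₀ ≥ 1` such that for all `B ≥ B₀`, every standardized maximin `D`-optimal design for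
the parameter space `[1,B]` is supported at more than `N` points. -/
theorem exp_growth_maximin_support_unbounded (N : ℕ) :
    ∃ B₀ : ℝ, 1 ≤ B₀ ∧
      ∀ B : ℝ, B₀ ≤ B →
        ∀ ξstar : Design, ↑ξstar.support ⊆ Set.Icc (0 : ℝ) 1 →
          (∀ ξ : Design, ↑ξ.support ⊆ Set.Icc (0 : ℝ) 1 →
            PhiMaximin B ξ ≤ PhiMaximin B ξstar) →
          N < ξstar.support.card := by
  classical
  set A : ℝ := 13 * 1638^N with hA
  set p : ℕ := 2*N+2 with hp
  set L₀ : ℝ := max 2 (A * 2^(2*N+1) * (p:ℝ)^p) with hL0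
  have hL0two : (2:ℝ) ≤ L₀ := le_max_left _ _
  have hL0nn : (0:ℝ) ≤ L₀ := by linarith
  refine ⟨Real.exp L₀, Real.one_le_exp hL0nn, ?_⟩
  intro B hB ξstar hsupp hopt
  by_contra hcard
  push_neg at hcard
  have hBpos : 0 < B := lt_of_lt_of_le (Real.exp_pos L₀) hB
  set L := Real.log B with hLdef
  clear_value L
  have hLL0 : L₀ ≤ L := by
    rw [hLdef]
    calc L₀ = Real.log (Real.exp L₀) := (Real.log_exp _).symm
      _ ≤ Real.log B := Real.log_le_log (Real.exp_pos _) hB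
  have hL2 : 2 ≤ L := le_trans hL0two hLL0
  have hB1 : 1 ≤ B := le_trans (Real.one_le_exp hL0nn) hB
  set m : ℕ := ⌊L⌋₊ + 1 with hm
  set k : ℕ := m + 1 with hk
  clear_value m k
  have hk2 : 2 ≤ k := by omega
  have hkR : (k:ℝ) = (m:ℝ) + 1 := by push_cast [hk]; ring
  have hk2R : (2:ℝ) ≤ (k:ℝ) := by exact_mod_cast hk2
  have hkpos : (0:ℝ) < (k:ℝ) := by linarith
  have hkL : (k:ℝ) ≤ L + 2 := by
    have h1 : (⌊L⌋₊ : ℝ) ≤ L := Nat.floor_le (by linarith)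
    have : (k:ℝ) = (⌊L⌋₊ : ℝ) + 2 := by push_cast [hk, hm]; ring
    linarith
  have hBm : B ≤ 3^m := by
    have h1 : L ≤ (m:ℝ) := by
      have := Nat.lt_floor_add_one L
      push_cast [hm]
      linarith
    calc B = Real.exp L := by rw [hLdef, Real.exp_log hBpos]
      _ ≤ Real.exp (m:ℝ) := Real.exp_le_exp.mpr h1
      _ = Real.exp 1 ^ m := by rw [← Real.exp_nat_mul, mul_one]
      _ ≤ 3^m := pow_le_pow_left₀ (Real.exp_pos 1).le
          (le_of_lt (lt_trans Real.exp_one_lt_d9 (by norm_num))) m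
  -- parameters
  set δ : ℝ := 1 / (3 * Real.exp 3 * (k:ℝ)) with hδdef
  set C : ℝ := 6 + Real.log (8*(k:ℝ)) with hCdef
  clear_value δ C
  have he3pos : (0:ℝ) < Real.exp 3 := Real.exp_pos 3
  have he31 : (1:ℝ) ≤ Real.exp 3 := Real.one_le_exp (by norm_num)
  have hδpos : 0 < δ := by rw [hδdef]; positivity
  have hlog8k0 : 0 ≤ Real.log (8*(k:ℝ)) := Real.log_nonneg (by linarith)
  have hC6 : 6 ≤ C := by rw [hCdef]; linarith
  have hCpos : 0 < C := by linarith
  have he3le : Real.exp 3 ≤ 21 := by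
    have h1 : Real.exp 3 = Real.exp 1 ^ 3 := by
      rw [← Real.exp_nat_mul]; norm_num
    have h2 := Real.exp_one_lt_d9
    have h3 := Real.exp_pos 1
    have h4 : Real.exp 1 ^ 3 < 2.7182818286^3 := by
      apply pow_lt_pow_left₀ h2 h3.le (by norm_num)
    rw [h1]
    nlinarith
  have hδ1 : δ ≤ 1 := by
    rw [hδdef, div_le_one (by positivity)]
    nlinarith
  have hδC : δ ≤ C := by linarith
  have hC13k : C ≤ 13*(k:ℝ) := by
    have hlog : Real.log (8*(k:ℝ)) ≤ 8*(k:ℝ) - 1 :=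
      Real.log_le_sub_one_of_pos (by linarith)
    rw [hCdef]
    linarith
  set R : ℝ := 2*C/δ with hRdef
  clear_value R
  have hRval : R = 6 * Real.exp 3 * (k:ℝ) * C := by
    rw [hRdef, hδdef]
    field_simp
    ring
  have hR1 : 1 ≤ R := by
    rw [hRdef, le_div_iff₀ hδpos, one_mul]; linarith
  have hRle : R ≤ 1638 * (k:ℝ)^2 := by
    rw [hRval]
    calc 6 * Real.exp 3 * (k:ℝ) * C ≤ 6 * 21 * (k:ℝ) * (13*(k:ℝ)) := by
          apply mul_le_mul ?_ hC13k hCpos.le (by positivity)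
          apply mul_le_mul_of_nonneg_right ?_ hkpos.le
          nlinarith
      _ = 1638 * (k:ℝ)^2 := by ring
  -- cand N ≤ B
  have hppos : (0:ℝ) < (p:ℝ) := by rw [hp]; push_cast; positivity
  have hApos : (0:ℝ) < A := by rw [hA]; positivity
  have hLbig : A * 2^(2*N+1) * (p:ℝ)^p ≤ L := le_trans (le_max_right _ _) hLL0
  have hLpos : (0:ℝ) < L := by linarith
  have hcandN : C * R^N ≤ B := by
    calc C * R^N ≤ (13*(k:ℝ)) * (1638*(k:ℝ)^2)^N := by
          apply mul_le_mul hC13k (pow_le_pow_left₀ (by positivity) hRle N) (by positivity)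
            (by positivity)
      _ ≤ 13*(L+2) * (1638*(L+2)^2)^N := by
          have hkL2 : (0:ℝ) ≤ (k:ℝ) := hkpos.le
          gcongr
      _ = A * (L+2)^(2*N+1) := by
          rw [hA, mul_pow, ← pow_mul]
          ring
      _ ≤ A * (2*L)^(2*N+1) := by gcongr; linarith
      _ = A * 2^(2*N+1) * L^(2*N+1) := by rw [mul_pow]; ring
      _ ≤ (L/(p:ℝ))^p := by
          rw [div_pow, le_div_iff₀ (by positivity : (0:ℝ) < (p:ℝ)^p)]
          calc A * 2^(2*N+1) * L^(2*N+1) * (p:ℝ)^p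
              = (A * 2^(2*N+1) * (p:ℝ)^p) * L^(2*N+1) := by ring
            _ ≤ L * L^(2*N+1) := mul_le_mul_of_nonneg_right hLbig (by positivity)
            _ = L^p := by rw [hp, pow_succ L (2*N+1)]; ring
      _ ≤ (1 + L/(p:ℝ))^p := by
          apply pow_le_pow_left₀ (by positivity)
          linarith [div_nonneg hLpos.le hppos.le]
      _ ≤ Real.exp (L/(p:ℝ)) ^ p := by
          apply pow_le_pow_left₀ (by positivity)
          linarith [Real.add_one_le_exp (L/(p:ℝ))]
      _ = Real.exp L := by
          rw [← Real.exp_nat_mul]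
          congr 1
          field_simp
      _ = B := by rw [hLdef]; exact Real.exp_log hBpos
  -- good index
  obtain ⟨i, hiN, hgood⟩ := exists_good_index ξstar.support N hcard δ C hδpos hδC
  rw [← hRdef] at hgood
  set β := C * R^i with hβdef
  clear_value β
  have hβmem : β ∈ Set.Icc (1:ℝ) B := by
    constructor
    · rw [hβdef]
      calc (1:ℝ) ≤ C := by linarith
        _ = C * 1 := (mul_one C).symm
        _ ≤ C * R^i := by
            apply mul_le_mul_of_nonneg_left (one_le_pow₀ hR1) hCpos.le
    · rw [hβdef]
      calc C * R^i ≤ C * R^N := by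
            apply mul_le_mul_of_nonneg_left (pow_le_pow_right₀ hR1 hiN) hCpos.le
        _ ≤ B := hcandN
  have hgood' : ∀ x ∈ ξstar.support, x ≠ 0 → β * x < δ ∨ C < β * x := by
    intro x hx hx0
    have hx01 := hsupp (Finset.mem_coe.mpr hx)
    exact hgood x hx (lt_of_le_of_ne hx01.1 (Ne.symm hx0))
  have hup := Phi_upper B ξstar hsupp β δ C hβmem hδpos hCpos hgood'
  -- numeric bound on the max
  have hexpC : Real.exp (-C) = Real.exp (-6) / (8*(k:ℝ)) := by
    rw [hCdef, neg_add, Real.exp_add, Real.exp_neg (Real.log (8*(k:ℝ))),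
      Real.exp_log (by linarith : (0:ℝ) < 8*(k:ℝ))]
    ring
  have hexp26 : Real.exp 2 * Real.exp (-6) = Real.exp (-4) := by
    rw [← Real.exp_add]; norm_num
  have hexp234 : Real.exp 2 = Real.exp (-4) * Real.exp 3 ^ 2 := by
    rw [pow_two, ← Real.exp_add, ← Real.exp_add]; norm_num
  have he4pos : (0:ℝ) < Real.exp (-4) := Real.exp_pos _
  have h1 : 4 * Real.exp 2 * δ^2 ≤ Real.exp (-4) / (2*(k:ℝ)) := by
    have heq : 4 * Real.exp 2 * δ^2 = Real.exp (-4) * (4 / (9 * (k:ℝ)^2)) := by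
      rw [hδdef, hexp234]
      field_simp
      ring
    have hfrac : 4 / (9 * (k:ℝ)^2) ≤ 1 / (2*(k:ℝ)) := by
      rw [div_le_div_iff₀ (by positivity) (by positivity)]
      nlinarith
    calc 4 * Real.exp 2 * δ^2 = Real.exp (-4) * (4 / (9 * (k:ℝ)^2)) := heq
      _ ≤ Real.exp (-4) * (1 / (2*(k:ℝ))) := mul_le_mul_of_nonneg_left hfrac he4pos.le
      _ = Real.exp (-4) / (2*(k:ℝ)) := by ring
  have h2 : 4 * Real.exp 2 * Real.exp (-C) ≤ Real.exp (-4) / (2*(k:ℝ)) := by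
    rw [hexpC]
    apply le_of_eq
    rw [← hexp26]
    field_simp
    ring
  have hMb : 4 * Real.exp 2 * max (δ^2) (Real.exp (-C)) ≤ Real.exp (-4) / (2*(k:ℝ)) := by
    rcases max_cases (δ^2) (Real.exp (-C)) with ⟨hmax, -⟩ | ⟨hmax, -⟩ <;> rw [hmax]
    · exact h1
    · exact h2
  have hlow := geom_lower m B hB1 hBm
  have hopt' := hopt (geomDesign m) (geomDesign_support_subset m)
  have hfin : Real.exp (-4) / (2*(k:ℝ)) < Real.exp (-4) / ((m:ℝ)+1) := by
    apply div_lt_div_of_pos_left he4pos (by linarith)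
    rw [hkR]; linarith
  have := le_trans hlow (le_trans hopt' (le_trans hup hMb))
  linarith
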